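/- Any subset of a 𝒯-least generating set is a 𝒯-least generating set for its own relative E-closure: if every theory in 𝒯'₀ \ 𝒯 is isolated by some set (𝒯'₀ ∪ 𝒯)_φ, then for any 𝒯''₀ ⊆ 𝒯'₀, every theory in 𝒯''₀ \ 𝒯 is isolated by some set (𝒯''₀ ∪ 𝒯)_φ, hence 𝒯''₀ is the 𝒯-least generating set for Cl_E(𝒯''₀) ∪ 𝒯. -/
import Mathlib


open Set

variable {Sentence : Type*}

/-- The set `𝒯_φ` of theories in `𝒯` containing the sentence `φ`. -/
def setAt (𝒯 : Set (Set Sentence)) (φ : Sentence) : Set (Set Sentence) :=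
  {T ∈ 𝒯 | φ ∈ T}

/-- The E-closure of a set of theories, relative to the predicate `isTh` of
being a theory: `𝒯` together with all theories `T` such that every sentence
of `T` belongs to infinitely many members of `𝒯`. -/
def ClE (isTh : Set Sentence → Prop) (𝒯 : Set (Set Sentence)) : Set (Set Sentence) :=
  𝒯 ∪ {T | isTh T ∧ ∀ φ ∈ T, (setAt 𝒯 φ).Infinite}

/-- `𝒢` is a `𝒯`-relatively generating set for `𝒯₀`. -/
def IsRelGen (isTh : Set Sentence → Prop) (𝒯 𝒯₀ 𝒢 : Set (Set Sentence)) : Prop :=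
  𝒢 ⊆ 𝒯₀ ∧ ClE isTh 𝒢 \ 𝒯 = 𝒯₀ \ 𝒯

/-- `𝒢` is the `𝒯`-least generating set for `𝒯₀`. -/
def IsLeastRelGen (isTh : Set Sentence → Prop) (𝒯 𝒯₀ 𝒢 : Set (Set Sentence)) : Prop :=
  IsRelGen isTh 𝒯 𝒯₀ 𝒢 ∧
    ∀ 𝒢' : Set (Set Sentence), IsRelGen isTh 𝒯 𝒯₀ 𝒢' → 𝒢 \ 𝒯 ⊆ 𝒢' \ 𝒯

lemma setAt_mono {𝒜 ℬ : Set (Set Sentence)} (h : 𝒜 ⊆ ℬ) (φ : Sentence) :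
    setAt 𝒜 φ ⊆ setAt ℬ φ := fun T hT => ⟨h hT.1, hT.2⟩

/-- Any subset of a `𝒯`-least generating set is a `𝒯`-least generating set for
its own relative E-closure. -/
theorem subset_of_least_relGen
    (conj : Sentence → Sentence → Sentence)
    (isTh : Set Sentence → Prop)
    (hne : ∀ T, isTh T → T.Nonempty)
    (hconj : ∀ T, isTh T → ∀ φ ψ : Sentence, conj φ ψ ∈ T ↔ φ ∈ T ∧ ψ ∈ T)
    (𝒯 𝒯'₀ : Set (Set Sentence))
    (h𝒯 : ∀ T ∈ 𝒯, isTh T) (h𝒯'₀ : ∀ T ∈ 𝒯'₀, isTh T)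
    (hTclosed : ClE isTh 𝒯 = 𝒯)
    (hiso : ∀ T ∈ 𝒯'₀ \ 𝒯, ∃ φ ∈ T, setAt (𝒯'₀ ∪ 𝒯) φ = {T}) :
    ∀ 𝒯''₀ ⊆ 𝒯'₀,
      (∀ T ∈ 𝒯''₀ \ 𝒯, ∃ φ ∈ T, setAt (𝒯''₀ ∪ 𝒯) φ = {T}) ∧
      IsLeastRelGen isTh 𝒯 (ClE isTh 𝒯''₀ ∪ 𝒯) 𝒯''₀ := by
  intro 𝒯''₀ hsub
  have hiso'' : ∀ T ∈ 𝒯''₀ \ 𝒯, ∃ φ ∈ T, setAt (𝒯''₀ ∪ 𝒯) φ = {T} := by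
    intro T hT
    obtain ⟨φ, hφT, hφ⟩ := hiso T ⟨hsub hT.1, hT.2⟩
    refine ⟨φ, hφT, Set.Subset.antisymm ?_ ?_⟩
    · intro S hS
      have : S ∈ setAt (𝒯'₀ ∪ 𝒯) φ :=
        setAt_mono (Set.union_subset_union_left _ hsub) φ hS
      rwa [hφ] at this
    · intro S hS
      rcases hS with rfl
      exact ⟨Or.inl hT.1, hφT⟩
  refine ⟨hiso'', ⟨fun T hT => Or.inl (Or.inl hT), ?_⟩, ?_⟩
  · exact (Set.union_diff_right).symm ▸ rfl
  · -- minimality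
    intro 𝒢' ⟨h𝒢sub, h𝒢eq⟩ T hT
    obtain ⟨φ, hφT, hφ⟩ := hiso'' T hT
    have hTcl : T ∈ ClE isTh 𝒢' \ 𝒯 := by
      rw [h𝒢eq, Set.union_diff_right]
      exact ⟨Or.inl hT.1, hT.2⟩
    refine ⟨?_, hT.2⟩
    rcases hTcl.1 with h | h
    · exact h
    · exfalso
      have hinf : (setAt 𝒢' φ).Infinite := h.2 φ hφT
      apply hinf
      have : setAt 𝒢' φ ⊆ {T} := by
        intro S hS
        have hS' : S ∈ ClE isTh 𝒯''₀ ∪ 𝒯 := h𝒢sub hS.1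
        rcases hS' with (hS' | hS') | hS'
        · rw [← hφ]; exact ⟨Or.inl hS', hS.2⟩
        · -- limit theory of 𝒯''₀: φ ∈ S lies in infinitely many members of 𝒯''₀;
          -- impossible since setAt 𝒯''₀ φ ⊆ {T}
          exfalso
          have hinf' : (setAt 𝒯''₀ φ).Infinite := hS'.2 φ hS.2
          apply hinf'
          have hsub' : setAt 𝒯''₀ φ ⊆ {T} := by
            rw [← hφ]; exact setAt_mono Set.subset_union_left φ
          exact (Set.finite_singleton T).subset hsub'
        · rw [← hφ]; exact ⟨Or.inr hS', hS.2⟩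
      exact (Set.finite_singleton T).subset this
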